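/- Let φ : ℝ → ℝ be Lipschitz with constant K > 0 and 1-periodic, let J = (−1/K, 1/K), and let α be irrational. For each a ∈ J there is a unique t = γ_α(a) with Trans(F_{t,a}) = α, and for all a₀, a₁ ∈ J with a₀ ≠ a₁: −sup φ ≤ (γ_α(a₁) − γ_α(a₀))/(a₁ − a₀) ≤ −inf φ. In particular γ_α is Lipschitz continuous on J. -/

import Mathlib

/-! For fixed `a`, write `F_t` for the lift `x ↦ x + t + a φ x`. The map `t ↦ Trans(F_t)` is
continuous, being the uniform limit of `t ↦ F_t^n(0)/n`, and stays within `|a| sup |φ|` of `t`, so it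
is onto. At an irrational value the translation number is strictly monotone: if `f + ε ≤ g` and
`Trans f = Trans g = α`, Dirichlet's theorem gives `q, p` with `0 < |qα - p| < ε`, and the gap `ε`
between `f^q` and `g^q` cannot fit on either side of the translation by `p`. This gives uniqueness
of `γ_α(a)`, and it also shows that `F_{γ(a₁),a₁} - F_{γ(a₀),a₀} = γ(a₁) - γ(a₀) + (a₁ - a₀) φ`
is neither `≥ ε` everywhere nor `≤ -ε` everywhere for any `ε > 0`; comparing with `sup φ` and
`inf φ` gives the slope bound. -/

open Filter Topology Set

/-- `τ` is the translation number of `F`: for every `x`, `(F^[n] x - x)/n → τ`. -/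
def IsTransNum (F : ℝ → ℝ) (τ : ℝ) : Prop :=
  ∀ x : ℝ, Filter.Tendsto (fun n : ℕ => (F^[n] x - x) / n) Filter.atTop (nhds τ)

theorem Irrational.exists_abs_nat_mul_sub_int_pos_lt {α : ℝ} (hα : Irrational α) {ε : ℝ}
    (hε : 0 < ε) : ∃ q : ℕ, q ≠ 0 ∧ ∃ p : ℤ, 0 < |q * α - p| ∧ |q * α - p| < ε := by
  obtain ⟨n, hn⟩ := exists_nat_gt (1 / ε)
  have hn0 : 0 < n := by exact_mod_cast (one_div_pos.2 hε).trans hn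
  obtain ⟨q, hq, -, hqα⟩ := Real.exists_nat_abs_mul_sub_round_le α hn0
  refine ⟨q, hq.ne', round (q * α), abs_pos.2 (sub_ne_zero.2 ?_), hqα.trans_lt ?_⟩
  · exact (hα.natCast_mul hq.ne').ne_int _
  · exact (one_div_lt (by positivity) hε).2 (by linarith)

namespace CircleDeg1Lift

theorem pow_apply_add_le_of_forall_add_le {f g : CircleDeg1Lift} {ε : ℝ} (hε : 0 ≤ ε)
    (h : ∀ x, f x + ε ≤ g x) {n : ℕ} (hn : n ≠ 0) (x : ℝ) : (f ^ n) x + ε ≤ (g ^ n) x := by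
  obtain ⟨m, rfl⟩ := Nat.exists_eq_succ_of_ne_zero hn
  have hfg : f ^ m ≤ g ^ m := pow_mono (fun y => (le_add_of_nonneg_right hε).trans (h y)) m
  simp only [pow_succ', mul_apply]
  exact (h _).trans (g.mono (hfg x))

theorem translationNumber_lt_of_forall_add_le {f g : CircleDeg1Lift}
    (hf : Irrational f.translationNumber) {ε : ℝ} (hε : 0 < ε) (h : ∀ x, f x + ε ≤ g x) :
    f.translationNumber < g.translationNumber := by
  refine (translationNumber_mono fun x => (le_add_of_nonneg_right hε.le).trans (h x)).lt_of_ne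
    fun heq => ?_
  obtain ⟨q, hq, p, hpos, hlt⟩ := hf.exists_abs_nat_mul_sub_int_pos_lt hε
  have hpow := pow_apply_add_le_of_forall_add_le hε.le h hq
  rcases abs_lt.1 hlt with ⟨hlt₁, hlt₂⟩
  rcases lt_or_gt_of_ne (abs_pos.1 hpos) with hneg | hpos
  · have : (f ^ q).translationNumber ≤ p - ε := translationNumber_le_of_le_add _ fun x => by
      have := (g ^ q).map_lt_of_translationNumber_lt_int (n := p)
        (by rw [translationNumber_pow, ← heq]; linarith) x
      linarith [hpow x]
    rw [translationNumber_pow] at this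
    linarith
  · have : p + ε ≤ (g ^ q).translationNumber := le_translationNumber_of_add_le _ fun x => by
      have := (f ^ q).lt_map_of_int_lt_translationNumber (n := p)
        (by rw [translationNumber_pow]; linarith) x
      linarith [hpow x]
    rw [translationNumber_pow, ← heq] at this
    linarith

theorem dist_pow_map_zero_div_translationNumber_le (f : CircleDeg1Lift) {n : ℕ} (hn : n ≠ 0) :
    dist ((f ^ n) 0 / n) f.translationNumber ≤ 1 / n := by
  have hn' : (0 : ℝ) < n := by positivity
  rw [Real.dist_eq, ← mul_div_cancel_left₀ f.translationNumber hn'.ne', ← sub_div, abs_div,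
    abs_of_pos hn', ← Real.dist_eq]
  gcongr
  exact f.dist_pow_map_zero_mul_translationNumber_le n

theorem continuous_translationNumber {X : Type*} [TopologicalSpace X] {F : X → CircleDeg1Lift}
    (hF : Continuous fun p : X × ℝ => F p.1 p.2) :
    Continuous fun x => (F x).translationNumber := by
  have hpow (n : ℕ) : Continuous fun p : X × ℝ => (F p.1 ^ n) p.2 := by
    induction n with
    | zero => simpa using continuous_snd
    | succ n ih =>
      simp only [pow_succ', mul_apply]
      exact hF.comp (continuous_fst.prodMk ih)
  refine TendstoUniformly.continuous (F := fun (n : ℕ) x => (F x ^ n) 0 / n) (p := atTop) ?_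
    (Frequently.of_forall fun n =>
      ((hpow n).comp (continuous_id.prodMk continuous_const)).div_const _)
  rw [Metric.tendstoUniformly_iff]
  intro ε hε
  obtain ⟨N, hN⟩ := exists_nat_gt (1 / ε)
  filter_upwards [eventually_gt_atTop N] with n hn x
  have hn0 : (0 : ℝ) < n := by exact_mod_cast (Nat.zero_le N).trans_lt hn
  rw [dist_comm]
  refine ((F x).dist_pow_map_zero_div_translationNumber_le (by omega)).trans_lt ?_
  rw [one_div_lt hn0 hε]
  exact hN.trans (by exact_mod_cast hn)

theorem abs_translationNumber_sub_le {f : CircleDeg1Lift} {t C : ℝ}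
    (h : ∀ x, |f x - (x + t)| ≤ C) : |f.translationNumber - t| ≤ C := by
  rw [abs_sub_le_iff]
  constructor
  · linarith [f.translationNumber_le_of_le_add (z := t + C) fun x => by
      linarith [(abs_le.1 (h x)).2]]
  · linarith [f.le_translationNumber_of_add_le (z := t - C) fun x => by
      linarith [(abs_le.1 (h x)).1]]

theorem surjective_translationNumber {F : ℝ → CircleDeg1Lift}
    (hF : Continuous fun p : ℝ × ℝ => F p.1 p.2) {C : ℝ} (h : ∀ t x, |F t x - (x + t)| ≤ C) :
    Function.Surjective fun t => (F t).translationNumber := by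
  have hC (t : ℝ) := abs_le.1 (abs_translationNumber_sub_le (h t))
  refine (continuous_translationNumber hF).surjective ?_ ?_
  · exact tendsto_atTop_mono (fun t => by simp only [id]; linarith [(hC t).1])
      (tendsto_atTop_add_const_right _ (-C) tendsto_id)
  · exact tendsto_atBot_mono (fun t => by simp only [id]; linarith [(hC t).2])
      (tendsto_atBot_add_const_right _ C tendsto_id)

end CircleDeg1Lift

theorem IsTransNum.eq_translationNumber {f : CircleDeg1Lift} {c : ℝ} (h : IsTransNum f c) :
    c = f.translationNumber :=
  tendsto_nhds_unique (h 0) <| by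
    simpa only [CircleDeg1Lift.coe_pow] using f.tendsto_translationNumber 0

theorem monotone_add_mul_of_lipschitz {φ : ℝ → ℝ} {K a : ℝ}
    (hLip : ∀ x y, |φ x - φ y| ≤ K * |x - y|) (ha : |a| * K ≤ 1) :
    Monotone fun x => x + a * φ x := by
  intro x y hxy
  have hyx : 0 ≤ y - x := sub_nonneg.2 hxy
  have : |a * φ y - a * φ x| ≤ y - x := calc
    |a * φ y - a * φ x| = |a| * |φ y - φ x| := by rw [← mul_sub, abs_mul]
    _ ≤ |a| * (K * (y - x)) := by gcongr; simpa [abs_of_nonneg hyx] using hLip y x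
    _ = (|a| * K) * (y - x) := by ring
    _ ≤ y - x := mul_le_of_le_one_left hyx ha
  dsimp only
  linarith [neg_abs_le (a * φ y - a * φ x)]

section PerturbedTranslation

variable {φ : ℝ → ℝ} (hper : Function.Periodic φ 1)

def perturbedTranslation {a : ℝ} (hmono : Monotone fun x => x + a * φ x) (t : ℝ) :
    CircleDeg1Lift where
  toFun x := x + t + a * φ x
  monotone' x y hxy := by linarith [hmono hxy]
  map_add_one' x := by rw [hper x]; ring

@[simp]
theorem perturbedTranslation_apply {a : ℝ} (hmono : Monotone fun x => x + a * φ x) (t x : ℝ) :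
    perturbedTranslation hper hmono t x = x + t + a * φ x := rfl

variable {hper}

theorem exists_unique_translationNumber_perturbedTranslation_eq (hφ : Continuous φ) {α : ℝ}
    (hα : Irrational α) {a : ℝ} (hmono : Monotone fun x => x + a * φ x) :
    ∃! t, (perturbedTranslation hper hmono t).translationNumber = α := by
  obtain ⟨M, hM⟩ := isBounded_iff_forall_norm_le.1 (hper.isBounded_of_continuous one_ne_zero hφ)
  obtain ⟨t, ht : (perturbedTranslation hper hmono t).translationNumber = α⟩ :=
    CircleDeg1Lift.surjective_translationNumber (F := perturbedTranslation hper hmono)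
      (C := |a| * M)
      (by simp only [perturbedTranslation_apply]; fun_prop)
      (fun t x => by
        simp only [perturbedTranslation_apply, add_sub_cancel_left, abs_mul]
        gcongr
        exact hM _ (mem_range_self x)) α
  refine ⟨t, ht, fun s hs => ?_⟩
  by_contra hne
  wlog hlt : s < t generalizing s t
  · exact this s hs t ht (Ne.symm hne) (lt_of_le_of_ne (not_lt.1 hlt) (Ne.symm hne))
  have := CircleDeg1Lift.translationNumber_lt_of_forall_add_le (hs ▸ hα) (sub_pos.2 hlt)
    (g := perturbedTranslation hper hmono t) fun x => by
      simp only [perturbedTranslation_apply]; linarith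
  exact this.ne (hs.trans ht.symm)

theorem slope_mem_Icc_of_translationNumber_perturbedTranslation_eq (hφ : Continuous φ)
    {α : ℝ} (hα : Irrational α) {a₀ a₁ t₀ t₁ : ℝ}
    (hmono₀ : Monotone fun x => x + a₀ * φ x) (hmono₁ : Monotone fun x => x + a₁ * φ x)
    (h₀ : (perturbedTranslation hper hmono₀ t₀).translationNumber = α)
    (h₁ : (perturbedTranslation hper hmono₁ t₁).translationNumber = α) (ha : a₀ < a₁) :
    -sSup (range φ) ≤ (t₁ - t₀) / (a₁ - a₀) ∧ (t₁ - t₀) / (a₁ - a₀) ≤ -sInf (range φ) := by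
  have hφb := hper.isBounded_of_continuous one_ne_zero hφ
  have hd : 0 < a₁ - a₀ := sub_pos.2 ha
  constructor
  · rw [le_div_iff₀ hd]
    by_contra! hlt
    have := CircleDeg1Lift.translationNumber_lt_of_forall_add_le (h₁ ▸ hα) (sub_pos.2 hlt)
      (g := perturbedTranslation hper hmono₀ t₀) fun x => by
        simp only [perturbedTranslation_apply]
        linarith [mul_le_mul_of_nonneg_left (le_csSup hφb.bddAbove (mem_range_self x)) hd.le]
    exact this.ne (h₁.trans h₀.symm)
  · rw [div_le_iff₀ hd]
    by_contra! hlt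
    have := CircleDeg1Lift.translationNumber_lt_of_forall_add_le (h₀ ▸ hα) (sub_pos.2 hlt)
      (g := perturbedTranslation hper hmono₁ t₁) fun x => by
        simp only [perturbedTranslation_apply]
        linarith [mul_le_mul_of_nonneg_left (csInf_le hφb.bddBelow (mem_range_self x)) hd.le]
    exact this.ne (h₀.trans h₁.symm)

end PerturbedTranslation

theorem stmt_7 (φ : ℝ → ℝ) (K : ℝ) (hK : 0 < K)
    (hLip : ∀ x y : ℝ, |φ x - φ y| ≤ K * |x - y|)
    (hper : ∀ x : ℝ, φ (x + 1) = φ x)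
    (τ : ℝ → ℝ → ℝ)
    (hτ : ∀ t : ℝ, ∀ a ∈ Set.Ioo (-(1 / K)) (1 / K),
      IsTransNum (fun x => x + t + a * φ x) (τ t a))
    (α : ℝ) (hα : Irrational α) :
    ∃ γ : ℝ → ℝ,
      (∀ a ∈ Set.Ioo (-(1 / K)) (1 / K),
        τ (γ a) a = α ∧ ∀ t : ℝ, τ t a = α → t = γ a) ∧
      (∀ a₀ ∈ Set.Ioo (-(1 / K)) (1 / K), ∀ a₁ ∈ Set.Ioo (-(1 / K)) (1 / K), a₀ ≠ a₁ →
        -sSup (Set.range φ) ≤ (γ a₁ - γ a₀) / (a₁ - a₀) ∧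
          (γ a₁ - γ a₀) / (a₁ - a₀) ≤ -sInf (Set.range φ)) := by
  have hφ : Continuous φ :=
    (LipschitzWith.of_dist_le_mul (K := K.toNNReal) fun x y => by
      simpa only [Real.dist_eq, Real.coe_toNNReal _ hK.le] using hLip x y).continuous
  have hmono (a : ℝ) (ha : a ∈ Ioo (-(1 / K)) (1 / K)) : Monotone fun x => x + a * φ x :=
    monotone_add_mul_of_lipschitz hLip ((lt_div_iff₀ hK).1 (abs_lt.2 ha)).le
  have hτF (t a : ℝ) (ha : a ∈ Ioo (-(1 / K)) (1 / K)) :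
      τ t a = (perturbedTranslation hper (hmono a ha) t).translationNumber :=
    IsTransNum.eq_translationNumber (f := perturbedTranslation hper (hmono a ha) t) (hτ t a ha)
  choose! γ hγ using fun a ha =>
    exists_unique_translationNumber_perturbedTranslation_eq hφ hα (hmono a ha)
  refine ⟨γ, fun a ha => ?_, fun a₀ ha₀ a₁ ha₁ hne => ?_⟩
  · simpa only [hτF _ a ha] using hγ a ha
  · wlog hlt : a₀ < a₁ generalizing a₀ a₁
    · rw [← neg_div_neg_eq, neg_sub, neg_sub]
      exact this a₁ ha₁ a₀ ha₀ hne.symm (lt_of_le_of_ne (not_lt.1 hlt) hne.symm)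
    exact slope_mem_Icc_of_translationNumber_perturbedTranslation_eq hφ hα (hmono a₀ ha₀)
      (hmono a₁ ha₁) (hγ a₀ ha₀).1 (hγ a₁ ha₁).1 hlt
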